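/- arXiv:2108.03194 — 2 statements merged into one kernel-verified Lean document; each statement's English description precedes it below -/
import Mathlib

section
/- Let λ ∈ ℕ, p ∈ [1, ∞), and let f, g : T^d → R be smooth functions. Then ‖ f(x) g(λ x) ‖_{L^p(T^d)} ≤ ‖f‖_{L^p(T^d)} ‖g‖_{L^p(T^d)} + C(p) √d ‖f‖_{C^1(T^d)} ‖g‖_{L^p(T^d)} λ^{−1/p}, where C(p) is a constant depending only on p. -/
open MeasureTheory
open scoped BigOperators ENNReal

noncomputable section

/-- The fundamental domain `[0,1)^d` of the torus `𝕋^d = ℝ^d/ℤ^d`. -/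
def Box (d : ℕ) : Set (Fin d → ℝ) := Set.univ.pi fun _ => Set.Ico (0:ℝ) 1

/-- `ℤ^d`-periodicity: a function of the torus `𝕋^d = ℝ^d/ℤ^d` seen as a periodic
function on `ℝ^d`. -/
def ZPer {d : ℕ} {E : Type*} (f : (Fin d → ℝ) → E) : Prop :=
  ∀ (x : Fin d → ℝ) (k : Fin d → ℤ), f (x + fun i => (k i : ℝ)) = f x

/-- The `C¹` norm `‖f‖_{C⁰} + ‖Df‖_{C⁰}` of a function on the torus. -/
def C1Norm {d : ℕ} (f : (Fin d → ℝ) → ℝ) : ℝ≥0∞ :=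
  (⨆ x : Fin d → ℝ, (‖f x‖₊ : ℝ≥0∞)) + ⨆ x : Fin d → ℝ, (‖fderiv ℝ f x‖₊ : ℝ≥0∞)

namespace IH

/-! ### Bounds for smooth periodic functions -/

lemma zper_fderiv {d : ℕ} {f : (Fin d → ℝ) → ℝ} (hf : Differentiable ℝ f) (hper : ZPer f) :
    ZPer (fderiv ℝ f) := by
  intro x k
  set c : Fin d → ℝ := fun i => (k i : ℝ) with hc
  have hg : (fun y => f (y + c)) = f := by funext y; rw [hper]
  have h1 : HasFDerivAt f (fderiv ℝ f x) (x + c) := by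
    have h0 : HasFDerivAt (fun y => f (y + c)) (fderiv ℝ f x) ((x + c) - c) := by
      rw [add_sub_cancel_right, hg]; exact (hf x).hasFDerivAt
    have h2 : HasFDerivAt (fun y : Fin d → ℝ => y - c) (ContinuousLinearMap.id ℝ _) (x + c) := by
      simpa using (hasFDerivAt_id (𝕜 := ℝ) (x + c)).sub_const c
    have h3 := h0.comp (x + c) h2
    simp only [ContinuousLinearMap.comp_id] at h3
    have h4 : ((fun y => f (y + c)) ∘ fun y : Fin d → ℝ => y - c) = f := by
      funext y; simp [Function.comp]
    rwa [h4] at h3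
  exact h1.fderiv

lemma exists_bound {d : ℕ} {f : (Fin d → ℝ) → ℝ} (hf : ContDiff ℝ (⊤ : ℕ∞) f) (hper : ZPer f) :
    ∃ M : ℝ, 0 ≤ M ∧ (∀ x, |f x| ≤ M) ∧ (∀ x, ‖fderiv ℝ f x‖ ≤ M) ∧
      ENNReal.ofReal M = C1Norm f := by
  have hfc : Continuous f := hf.continuous
  have hfd : Continuous (fderiv ℝ f) := hf.continuous_fderiv (by simp)
  have key : ∀ (E : Type) [inst : NormedAddCommGroup E] (h : (Fin d → ℝ) → E),
      Continuous h → ZPer h → ∃ M : ℝ, 0 ≤ M ∧ (∀ x, ‖h x‖ ≤ M) ∧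
        (⨆ x, (‖h x‖₊ : ℝ≥0∞)) ≠ ∞ := by
    intro E _ h hc hp
    obtain ⟨M, hM⟩ := (isCompact_Icc (a := (0 : Fin d → ℝ)) (b := 1)).exists_bound_of_continuousOn
      hc.continuousOn
    have hM0 : 0 ≤ M := le_trans (norm_nonneg _)
      (hM 0 (Set.mem_Icc.2 ⟨le_refl _, zero_le_one⟩))
    have hb : ∀ x, ‖h x‖ ≤ M := by
      intro x
      have heq := hp (fun i => x i - (⌊x i⌋ : ℝ)) (fun i => ⌊x i⌋)
      have hx : ((fun i => x i - (⌊x i⌋ : ℝ)) + fun i => ((⌊x i⌋ : ℤ) : ℝ)) = x := by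
        funext i; simp
      rw [hx] at heq
      rw [heq]
      apply hM
      refine Set.mem_Icc.2 ⟨fun i => ?_, fun i => ?_⟩
      · have := Int.floor_le (x i); simp only [Pi.zero_apply]; linarith
      · have := Int.lt_floor_add_one (x i); simp only [Pi.one_apply]; linarith
    refine ⟨M, hM0, hb, ?_⟩
    refine ne_of_lt (lt_of_le_of_lt (iSup_le fun x => ?_) (ENNReal.ofReal_lt_top (r := M + 1)))
    rw [← enorm_eq_nnnorm, ← ofReal_norm]
    exact ENNReal.ofReal_le_ofReal ((hb x).trans (by linarith))
  obtain ⟨M1, hM10, hb1, hfin1⟩ := key ℝ f hfc hper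
  obtain ⟨M2, hM20, hb2, hfin2⟩ :=
    key ((Fin d → ℝ) →L[ℝ] ℝ) (fderiv ℝ f) hfd (zper_fderiv (hf.differentiable (by simp)) hper)
  set A := ⨆ x : Fin d → ℝ, (‖f x‖₊ : ℝ≥0∞) with hA
  set B := ⨆ x : Fin d → ℝ, (‖fderiv ℝ f x‖₊ : ℝ≥0∞) with hB
  have key2 : ∀ (E : Type) [inst : NormedAddCommGroup E] (h : (Fin d → ℝ) → E)
      (S : ℝ≥0∞), S = (⨆ x, (‖h x‖₊ : ℝ≥0∞)) → S ≠ ∞ → ∀ x, ‖h x‖ ≤ S.toReal := by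
    intro E _ h S hS hfin x
    have : (‖h x‖₊ : ℝ≥0∞) ≤ S := hS ▸ le_iSup (fun x => (‖h x‖₊ : ℝ≥0∞)) x
    have h2 := ENNReal.toReal_mono hfin this
    simpa using h2
  refine ⟨A.toReal + B.toReal, by positivity, fun x => ?_, fun x => ?_, ?_⟩
  · calc |f x| = ‖f x‖ := rfl
    _ ≤ A.toReal := key2 ℝ f A hA hfin1 x
    _ ≤ A.toReal + B.toReal := le_add_of_nonneg_right ENNReal.toReal_nonneg
  · calc ‖fderiv ℝ f x‖ ≤ B.toReal := key2 _ (fderiv ℝ f) B hB hfin2 x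
    _ ≤ A.toReal + B.toReal := le_add_of_nonneg_left ENNReal.toReal_nonneg
  · rw [ENNReal.ofReal_add ENNReal.toReal_nonneg ENNReal.toReal_nonneg,
      ENNReal.ofReal_toReal hfin1, ENNReal.ofReal_toReal hfin2]
    rfl

/-! ### Cube decomposition of the box -/

variable {d lam : ℕ}

def cube (d lam : ℕ) (k : Fin d → Fin lam) : Set (Fin d → ℝ) :=
  Set.univ.pi fun i => Set.Ico ((k i : ℝ) / lam) (((k i : ℝ) + 1) / lam)

def corner (d lam : ℕ) (k : Fin d → Fin lam) : Fin d → ℝ := fun i => (k i : ℝ) / lam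

lemma cube_measurable (k : Fin d → Fin lam) : MeasurableSet (cube d lam k) :=
  MeasurableSet.univ_pi fun _ => measurableSet_Ico

lemma box_measurable : MeasurableSet (Box d) :=
  MeasurableSet.univ_pi fun _ => measurableSet_Ico

lemma corner_mem_cube (hl : 0 < lam) (k : Fin d → Fin lam) : corner d lam k ∈ cube d lam k := by
  intro i _
  have hl' : (0:ℝ) < lam := by exact_mod_cast hl
  refine ⟨le_refl _, ?_⟩
  show (k i : ℝ) / lam < ((k i : ℝ) + 1) / lam
  rw [div_lt_div_iff_of_pos_right hl']
  linarith

lemma mem_cube_iff (hl : 0 < lam) (k : Fin d → Fin lam) (x : Fin d → ℝ) :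
    x ∈ cube d lam k ↔ ∀ i, (k i : ℝ) ≤ lam * x i ∧ lam * x i < (k i : ℝ) + 1 := by
  have hl' : (0:ℝ) < lam := by exact_mod_cast hl
  simp only [cube, Set.mem_pi, Set.mem_univ, forall_true_left, Set.mem_Ico]
  refine forall_congr' fun i => ?_
  rw [div_le_iff₀ hl', lt_div_iff₀ hl']
  constructor
  · rintro ⟨h1, h2⟩
    exact ⟨by linarith [mul_comm (x i) (lam:ℝ)], by linarith [mul_comm (x i) (lam:ℝ)]⟩
  · rintro ⟨h1, h2⟩
    exact ⟨by linarith [mul_comm (x i) (lam:ℝ)], by linarith [mul_comm (x i) (lam:ℝ)]⟩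

lemma box_eq_union (hl : 0 < lam) : Box d = ⋃ k : Fin d → Fin lam, cube d lam k := by
  have hl' : (0:ℝ) < lam := by exact_mod_cast hl
  ext x
  simp only [Box, Set.mem_pi, Set.mem_univ, forall_true_left, Set.mem_Ico, Set.mem_iUnion]
  constructor
  · intro hx
    have hfl : ∀ i, ⌊(lam:ℝ) * x i⌋₊ < lam := by
      intro i
      rw [Nat.floor_lt (by have := (hx i).1; positivity)]
      have := (hx i).2
      nlinarith
    refine ⟨fun i => ⟨⌊(lam:ℝ) * x i⌋₊, hfl i⟩, ?_⟩
    rw [mem_cube_iff hl]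
    intro i
    have h0 : (0:ℝ) ≤ lam * x i := by have := (hx i).1; positivity
    constructor
    · simpa using Nat.floor_le h0
    · simpa using Nat.lt_floor_add_one ((lam:ℝ) * x i)
  · rintro ⟨k, hk⟩
    rw [mem_cube_iff hl] at hk
    intro i
    obtain ⟨h1, h2⟩ := hk i
    have hki : (k i : ℝ) + 1 ≤ lam := by
      have : (k i : ℕ) + 1 ≤ lam := (k i).2
      exact_mod_cast this
    constructor
    · nlinarith
    · nlinarith

lemma cube_disjoint (hl : 0 < lam) :
    Pairwise (Function.onFun Disjoint (cube d lam)) := by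
  intro k k' hkk'
  rw [Function.onFun, Set.disjoint_left]
  intro x hx hx'
  rw [mem_cube_iff hl] at hx hx'
  apply hkk'
  funext i
  obtain ⟨a1, a2⟩ := hx i
  obtain ⟨b1, b2⟩ := hx' i
  ext
  by_contra hne
  rcases Nat.lt_or_ge (k i : ℕ) (k' i : ℕ) with h | h
  · have : ((k i : ℕ) : ℝ) + 1 ≤ (k' i : ℕ) := by exact_mod_cast h
    push_cast at *; linarith
  · have h' : (k' i : ℕ) < (k i : ℕ) := lt_of_le_of_ne h (fun h => hne h.symm)
    have : ((k' i : ℕ) : ℝ) + 1 ≤ (k i : ℕ) := by exact_mod_cast h'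
    push_cast at *; linarith

lemma volume_cube (hl : 0 < lam) (k : Fin d → Fin lam) :
    volume (cube d lam k) = ENNReal.ofReal (((lam:ℝ)^d)⁻¹) := by
  have hl' : (0:ℝ) < lam := by exact_mod_cast hl
  rw [cube, Real.volume_pi_Ico]
  have he : ∀ i : Fin d, ((k i:ℝ) + 1)/lam - (k i:ℝ)/lam = (lam:ℝ)⁻¹ := by
    intro i; field_simp; ring
  simp only [he]
  rw [Finset.prod_const, ← ENNReal.ofReal_pow (by positivity), inv_pow]
  simp

lemma lintegral_box_eq_sum (hl : 0 < lam) (F : (Fin d → ℝ) → ℝ≥0∞) :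
    ∫⁻ x in Box d, F x = ∑ k : Fin d → Fin lam, ∫⁻ x in cube d lam k, F x := by
  rw [box_eq_union hl, lintegral_iUnion (fun k => cube_measurable k) (cube_disjoint hl),
    tsum_fintype]

lemma translate_lintegral (G : (Fin d → ℝ) → ℝ≥0∞) (hG : Measurable G)
    (hper : ∀ (x : Fin d → ℝ) (kk : Fin d → ℤ), G (x + fun i => (kk i : ℝ)) = G x)
    (k : Fin d → Fin lam) :
    ∫⁻ y in Set.univ.pi (fun i => Set.Ico ((k i:ℝ)) ((k i:ℝ)+1)), G y = ∫⁻ x in Box d, G x := by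
  set c : Fin d → ℝ := fun i => (k i : ℝ) with hc
  have hmp : MeasurePreserving (fun x : Fin d → ℝ => x + c) volume volume :=
    measurePreserving_add_right volume c
  set T := Set.univ.pi (fun i => Set.Ico ((k i:ℝ)) ((k i:ℝ)+1)) with hT
  have hTm : MeasurableSet T := MeasurableSet.univ_pi fun _ => measurableSet_Ico
  have h1 : ∫⁻ y in T, G y ∂volume = ∫⁻ y in T, G y ∂(Measure.map (fun x => x + c) volume) := by
    rw [hmp.map_eq]
  rw [h1, setLIntegral_map hTm hG (measurable_add_const c)]
  have hpre : (fun x : Fin d → ℝ => x + c) ⁻¹' T = Box d := by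
    ext x
    simp only [Set.mem_preimage, hT, Box, Set.mem_pi, Set.mem_univ, forall_true_left,
      Set.mem_Ico, Pi.add_apply]
    refine forall_congr' fun i => ?_
    simp only [hc]
    constructor
    · rintro ⟨h1, h2⟩; constructor <;> linarith
    · rintro ⟨h1, h2⟩; constructor <;> linarith
  rw [hpre]
  refine setLIntegral_congr_fun box_measurable (fun x hx => ?_)
  have h2 := hper x (fun i => ((k i : ℕ) : ℤ))
  have h3 : (fun i => (((k i : ℕ) : ℤ) : ℝ)) = c := by funext i; push_cast; rfl
  rw [h3] at h2
  exact h2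

lemma cube_scale (hl : 0 < lam) (G : (Fin d → ℝ) → ℝ≥0∞) (hG : Measurable G)
    (hper : ∀ (x : Fin d → ℝ) (kk : Fin d → ℤ), G (x + fun i => (kk i : ℝ)) = G x)
    (k : Fin d → Fin lam) :
    ∫⁻ x in cube d lam k, G ((lam:ℝ) • x)
      = ENNReal.ofReal (((lam:ℝ)^d)⁻¹) * ∫⁻ x in Box d, G x := by
  have hl' : (0:ℝ) < lam := by exact_mod_cast hl
  set T := Set.univ.pi (fun i => Set.Ico ((k i:ℝ)) ((k i:ℝ)+1)) with hT
  have hTm : MeasurableSet T := MeasurableSet.univ_pi fun _ => measurableSet_Ico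
  have hpre : (fun x : Fin d → ℝ => (lam:ℝ) • x) ⁻¹' T = cube d lam k := by
    ext x
    simp only [Set.mem_preimage, hT, cube, Set.mem_pi, Set.mem_univ, forall_true_left,
      Set.mem_Ico, Pi.smul_apply, smul_eq_mul]
    refine forall_congr' fun i => ?_
    rw [div_le_iff₀ hl', lt_div_iff₀ hl', mul_comm (x i) (lam:ℝ)]
  have hmap : Measure.map (fun x : Fin d → ℝ => (lam:ℝ) • x) volume
      = ENNReal.ofReal (((lam:ℝ)^d)⁻¹) • volume := by
    have := MeasureTheory.Measure.map_addHaar_smul (μ := (volume : Measure (Fin d → ℝ)))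
      (ne_of_gt hl')
    rw [this]
    congr 1
    rw [Module.finrank_fin_fun, abs_of_nonneg (by positivity)]
  have hsm : Measurable (fun x : Fin d → ℝ => (lam:ℝ) • x) :=
    (continuous_const_smul ((lam:ℝ))).measurable
  calc ∫⁻ x in cube d lam k, G ((lam:ℝ) • x)
      = ∫⁻ x in (fun x : Fin d → ℝ => (lam:ℝ) • x) ⁻¹' T, G ((lam:ℝ) • x) := by rw [hpre]
    _ = ∫⁻ y in T, G y ∂(Measure.map (fun x : Fin d → ℝ => (lam:ℝ) • x) volume) :=
        (setLIntegral_map hTm hG hsm).symm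
    _ = ENNReal.ofReal (((lam:ℝ)^d)⁻¹) * ∫⁻ y in T, G y := by
        rw [hmap, Measure.restrict_smul, lintegral_smul_measure, smul_eq_mul]
    _ = ENNReal.ofReal (((lam:ℝ)^d)⁻¹) * ∫⁻ x in Box d, G x := by
        rw [translate_lintegral G hG hper k]

lemma card_mul_vol (hl : 0 < lam) :
    ((lam^d : ℕ) : ℝ≥0∞) * ENNReal.ofReal (((lam:ℝ)^d)⁻¹) = 1 := by
  have h1 : ENNReal.ofReal (((lam:ℝ)^d)⁻¹) = (((lam^d : ℕ) : ℝ≥0∞))⁻¹ := by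
    rw [ENNReal.ofReal_inv_of_pos (by positivity), ← ENNReal.ofReal_natCast (lam^d)]
    congr 1; push_cast; ring
  rw [h1, ENNReal.mul_inv_cancel (Nat.cast_ne_zero.mpr (pow_ne_zero d hl.ne'))
    (ENNReal.natCast_ne_top _)]

lemma periodic_lintegral (hl : 0 < lam) (G : (Fin d → ℝ) → ℝ≥0∞) (hG : Measurable G)
    (hper : ∀ (x : Fin d → ℝ) (kk : Fin d → ℤ), G (x + fun i => (kk i : ℝ)) = G x) :
    ∫⁻ x in Box d, G ((lam:ℝ) • x) = ∫⁻ x in Box d, G x := by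
  rw [lintegral_box_eq_sum hl (fun x => G ((lam:ℝ) • x))]
  have h : ∀ k : Fin d → Fin lam, ∫⁻ x in cube d lam k, G ((lam:ℝ) • x)
      = ENNReal.ofReal (((lam:ℝ)^d)⁻¹) * ∫⁻ x in Box d, G x := cube_scale hl G hG hper
  rw [Finset.sum_congr rfl (fun k _ => h k), Finset.sum_const, Finset.card_univ,
    Fintype.card_fun, Fintype.card_fin, Fintype.card_fin, nsmul_eq_mul, ← mul_assoc,
    card_mul_vol hl, one_mul]

/-! ### Pointwise estimate -/

lemma rpow_bound {p : ℝ} (hp : 1 ≤ p) {a b M δ : ℝ} (ha : 0 ≤ a) (hb : 0 ≤ b)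
    (haM : a ≤ M) (hab : |a - b| ≤ δ) :
    a ^ p ≤ b ^ p + p * M ^ (p - 1) * δ := by
  have hδ : 0 ≤ δ := le_trans (abs_nonneg _) hab
  have hM : 0 ≤ M := le_trans ha haM
  have hterm : 0 ≤ p * M ^ (p - 1) * δ := by positivity
  rcases le_or_gt a b with h | h
  · calc a ^ p ≤ b ^ p := Real.rpow_le_rpow ha h (by linarith)
    _ ≤ b ^ p + p * M ^ (p - 1) * δ := le_add_of_nonneg_right hterm
  · have ha' : 0 < a := lt_of_le_of_lt hb h
    have hs : -1 ≤ b / a - 1 := by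
      have : 0 ≤ b / a := div_nonneg hb ha'.le
      linarith
    have hbern := one_add_mul_self_le_rpow_one_add hs hp
    rw [add_sub_cancel] at hbern
    rw [Real.div_rpow hb ha'.le] at hbern
    have hap : (0:ℝ) < a ^ p := Real.rpow_pos_of_pos ha' p
    have hmul := mul_le_mul_of_nonneg_right hbern hap.le
    rw [div_mul_cancel₀ _ (ne_of_gt hap)] at hmul
    have hpm1 : a ^ (p - 1) = a ^ p / a := by
      rw [Real.rpow_sub ha', Real.rpow_one]
    have hrw : (1 + p * (b / a - 1)) * a ^ p = a ^ p + p * (b - a) * (a ^ p / a) := by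
      field_simp
    rw [hrw, ← hpm1] at hmul
    have h3 : a ^ (p - 1) ≤ M ^ (p - 1) := Real.rpow_le_rpow ha haM (by linarith)
    have h4 : (0:ℝ) ≤ a ^ (p - 1) := Real.rpow_nonneg ha _
    have h2 : a - b ≤ δ := le_trans (le_abs_self _) hab
    have hab0 : 0 ≤ a - b := by linarith
    have hp0 : 0 < p := by linarith
    nlinarith [mul_le_mul h2 h3 h4 hδ, mul_le_mul_of_nonneg_left (mul_le_mul h2 h3 h4 hδ) hp0.le]

lemma nnnorm_rpow_bound {d : ℕ} {p : ℝ} (hp : 1 ≤ p) {f : (Fin d → ℝ) → ℝ} {M δ : ℝ}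
    (hdiff : Differentiable ℝ f) (hbM : ∀ x, |f x| ≤ M) (hdM : ∀ x, ‖fderiv ℝ f x‖ ≤ M)
    (hδ : 0 ≤ δ) (x y : Fin d → ℝ) (hxy : ‖x - y‖ ≤ δ) :
    ((‖f x‖₊ : ℝ≥0∞)) ^ p ≤ (‖f y‖₊ : ℝ≥0∞) ^ p + ENNReal.ofReal (p * M ^ (p-1) * (M * δ)) := by
  have hM0 : 0 ≤ M := le_trans (abs_nonneg _) (hbM x)
  have hlip : ‖f x - f y‖ ≤ M * ‖x - y‖ :=
    convex_univ.norm_image_sub_le_of_norm_fderiv_le (fun z _ => hdiff z) (fun z _ => hdM z)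
      (Set.mem_univ y) (Set.mem_univ x)
  have habs : |(|f x| - |f y|)| ≤ M * δ := by
    calc |(|f x| - |f y|)| ≤ |f x - f y| := abs_abs_sub_abs_le_abs_sub _ _
      _ = ‖f x - f y‖ := (Real.norm_eq_abs _).symm
      _ ≤ M * ‖x - y‖ := hlip
      _ ≤ M * δ := mul_le_mul_of_nonneg_left hxy hM0
  have key := rpow_bound hp (abs_nonneg (f x)) (abs_nonneg (f y)) (hbM x) habs
  have e1 : ∀ z : ℝ, ((‖z‖₊ : ℝ≥0∞)) ^ p = ENNReal.ofReal (|z| ^ p) := by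
    intro z
    rw [← enorm_eq_nnnorm, ← ofReal_norm, ENNReal.ofReal_rpow_of_nonneg (norm_nonneg _) (by linarith),
      Real.norm_eq_abs]
  rw [e1, e1, ← ENNReal.ofReal_add (Real.rpow_nonneg (abs_nonneg _) _) (by positivity)]
  exact ENNReal.ofReal_le_ofReal key

lemma dist_corner_le (hl : 0 < lam) (k : Fin d → Fin lam) {x : Fin d → ℝ}
    (hx : x ∈ cube d lam k) : ‖x - corner d lam k‖ ≤ Real.sqrt d / lam := by
  have hl' : (0:ℝ) < lam := by exact_mod_cast hl
  have hδ0 : 0 ≤ Real.sqrt d / lam := by positivity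
  rw [pi_norm_le_iff_of_nonneg hδ0]
  intro i
  have hdpos : 0 < d := i.pos
  have hd1 : (1:ℝ) ≤ Real.sqrt d := by
    rw [Real.one_le_sqrt]
    exact_mod_cast hdpos
  obtain ⟨h1, h2⟩ := hx i (Set.mem_univ i)
  rw [Pi.sub_apply, Real.norm_eq_abs]
  have hupper : x i - corner d lam k i < 1 / lam := by
    have : ((k i : ℝ) + 1) / lam = (k i : ℝ) / lam + 1 / lam := by ring
    rw [this] at h2
    simp only [corner]
    linarith
  have hlower : 0 ≤ x i - corner d lam k i := by
    simp only [corner]; linarith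
  have hcmp : 1 / (lam:ℝ) ≤ Real.sqrt d / lam := by gcongr
  rw [abs_le]
  constructor
  · linarith
  · linarith

/-! ### Main integral estimate -/

lemma main_estimate {d lam : ℕ} {p : ℝ} (hp : 1 ≤ p) (hl : 0 < lam)
    (f g : (Fin d → ℝ) → ℝ) (hf : ContDiff ℝ (⊤ : ℕ∞) f) (hg : ContDiff ℝ (⊤ : ℕ∞) g) (hgper : ZPer g)
    {M : ℝ} (hbM : ∀ x, |f x| ≤ M) (hdM : ∀ x, ‖fderiv ℝ f x‖ ≤ M) :
    ∫⁻ x in Box d, ((‖f x * g ((lam:ℝ) • x)‖₊ : ℝ≥0∞)) ^ p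
      ≤ ((∫⁻ x in Box d, ((‖f x‖₊ : ℝ≥0∞)) ^ p)
          + 2 * ENNReal.ofReal (p * M ^ (p-1) * (M * (Real.sqrt d / lam))))
        * ∫⁻ x in Box d, ((‖g x‖₊ : ℝ≥0∞)) ^ p := by
  have hl' : (0:ℝ) < lam := by exact_mod_cast hl
  have hp0 : (0:ℝ) ≤ p := by linarith
  set δ : ℝ := Real.sqrt d / lam with hδdef
  have hδ0 : 0 ≤ δ := by positivity
  set ε : ℝ≥0∞ := ENNReal.ofReal (p * M ^ (p-1) * (M * δ)) with hεdef
  set v : ℝ≥0∞ := ENNReal.ofReal (((lam:ℝ)^d)⁻¹) with hvdef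
  set Hf : (Fin d → ℝ) → ℝ≥0∞ := fun x => ((‖f x‖₊ : ℝ≥0∞)) ^ p with hHfdef
  set Hg : (Fin d → ℝ) → ℝ≥0∞ := fun x => ((‖g x‖₊ : ℝ≥0∞)) ^ p with hHgdef
  have hHf : Measurable Hf := (hf.continuous.measurable.nnnorm.coe_nnreal_ennreal).pow_const p
  have hHg : Measurable Hg := (hg.continuous.measurable.nnnorm.coe_nnreal_ennreal).pow_const p
  have hsm : Measurable (fun x : Fin d → ℝ => (lam:ℝ) • x) :=
    (continuous_const_smul ((lam:ℝ))).measurable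
  have hGs : Measurable (fun x => Hg ((lam:ℝ) • x)) := hHg.comp hsm
  have hHgper : ∀ (x : Fin d → ℝ) (kk : Fin d → ℤ), Hg (x + fun i => (kk i : ℝ)) = Hg x := by
    intro x kk
    simp only [hHgdef]
    rw [hgper]
  have hsplit : ∀ x : Fin d → ℝ,
      ((‖f x * g ((lam:ℝ) • x)‖₊ : ℝ≥0∞)) ^ p = Hf x * Hg ((lam:ℝ) • x) := by
    intro x
    simp only [hHfdef, hHgdef, nnnorm_mul, ENNReal.coe_mul]
    rw [ENNReal.mul_rpow_of_nonneg _ _ hp0]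
  have hdiff : Differentiable ℝ f := hf.differentiable (by simp)
  have hpoint : ∀ (k : Fin d → Fin lam) (x : Fin d → ℝ), x ∈ cube d lam k →
      Hf x ≤ Hf (corner d lam k) + ε ∧ Hf (corner d lam k) ≤ Hf x + ε := by
    intro k x hx
    have h1 := dist_corner_le hl k hx
    constructor
    · exact nnnorm_rpow_bound hp hdiff hbM hdM hδ0 x (corner d lam k) h1
    · refine nnnorm_rpow_bound hp hdiff hbM hdM hδ0 (corner d lam k) x ?_
      rw [norm_sub_rev]
      exact h1
  set Ig : ℝ≥0∞ := ∫⁻ x in Box d, Hg x with hIgdef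
  set If : ℝ≥0∞ := ∫⁻ x in Box d, Hf x with hIfdef
  have E1 : ∀ k : Fin d → Fin lam,
      ∫⁻ x in cube d lam k, Hf x * Hg ((lam:ℝ) • x)
        ≤ (Hf (corner d lam k) + ε) * (v * Ig) := by
    intro k
    calc ∫⁻ x in cube d lam k, Hf x * Hg ((lam:ℝ) • x)
        ≤ ∫⁻ x in cube d lam k, (Hf (corner d lam k) + ε) * Hg ((lam:ℝ) • x) := by
          refine setLIntegral_mono (hGs.const_mul _) fun x hx => ?_
          exact mul_le_mul_left ((hpoint k x hx).1) _
      _ = (Hf (corner d lam k) + ε) * ∫⁻ x in cube d lam k, Hg ((lam:ℝ) • x) :=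
          lintegral_const_mul _ hGs
      _ = (Hf (corner d lam k) + ε) * (v * Ig) := by
          rw [cube_scale hl Hg hHg hHgper k, ← hvdef, ← hIgdef]
  have E2 : ∀ k : Fin d → Fin lam,
      Hf (corner d lam k) * v ≤ (∫⁻ x in cube d lam k, Hf x) + ε * v := by
    intro k
    calc Hf (corner d lam k) * v
        = ∫⁻ _x in cube d lam k, Hf (corner d lam k) := by
          rw [setLIntegral_const, volume_cube hl k, ← hvdef]
      _ ≤ ∫⁻ x in cube d lam k, (Hf x + ε) := by
          refine setLIntegral_mono (hHf.add measurable_const) fun x hx => ?_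
          exact (hpoint k x hx).2
      _ = (∫⁻ x in cube d lam k, Hf x) + ε * v := by
          rw [lintegral_add_right _ measurable_const, setLIntegral_const, volume_cube hl k,
            ← hvdef]
  calc ∫⁻ x in Box d, ((‖f x * g ((lam:ℝ) • x)‖₊ : ℝ≥0∞)) ^ p
      = ∫⁻ x in Box d, Hf x * Hg ((lam:ℝ) • x) := lintegral_congr fun x => hsplit x
    _ = ∑ k : Fin d → Fin lam, ∫⁻ x in cube d lam k, Hf x * Hg ((lam:ℝ) • x) :=
        lintegral_box_eq_sum hl _
    _ ≤ ∑ k : Fin d → Fin lam, (Hf (corner d lam k) + ε) * (v * Ig) :=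
        Finset.sum_le_sum fun k _ => E1 k
    _ = (∑ k : Fin d → Fin lam, (Hf (corner d lam k) * v + ε * v)) * Ig := by
        rw [Finset.sum_mul]
        refine Finset.sum_congr rfl fun k _ => ?_
        ring
    _ ≤ (∑ k : Fin d → Fin lam, ((∫⁻ x in cube d lam k, Hf x) + ε * v + ε * v)) * Ig := by
        refine mul_le_mul_left (Finset.sum_le_sum fun k _ => ?_) Ig
        exact add_le_add_left (E2 k) _
    _ = (If + 2 * ε) * Ig := by
        congr 1
        have hcv : ((lam ^ d : ℕ) : ℝ≥0∞) * (ε * v) = ε := by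
          rw [mul_comm ε v, ← mul_assoc, card_mul_vol hl, one_mul]
        rw [Finset.sum_add_distrib, Finset.sum_add_distrib, ← lintegral_box_eq_sum hl Hf,
          ← hIfdef, Finset.sum_const, Finset.card_univ, Fintype.card_fun,
          Fintype.card_fin, Fintype.card_fin, nsmul_eq_mul, hcv, two_mul, ← add_assoc]

end IH

/-- Real-number coefficient computation. -/
lemma IH.coeff_bound {p : ℝ} (hp : 1 ≤ p) {M : ℝ} (hM0 : 0 ≤ M) (d lam : ℕ) (hl : 0 < lam) :
    (2 * (p * M ^ (p-1) * (M * (Real.sqrt d / lam)))) ^ (1/p)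
      ≤ (2 * p) * Real.sqrt d * (((lam:ℝ) ^ (1/p))⁻¹) * M := by
  have hp0 : (0:ℝ) < p := by linarith
  have hl' : (0:ℝ) < lam := by exact_mod_cast hl
  have h1p0 : (0:ℝ) ≤ 1/p := by positivity
  have h1p1 : 1/p ≤ 1 := by rw [div_le_one hp0]; linarith
  have hMp : M ^ (p-1) * M = M ^ p := by
    have := Real.rpow_add' hM0 (y := p - 1) (z := 1) (by simp; linarith)
    rw [sub_add_cancel] at this
    rw [this, Real.rpow_one]
  rcases Nat.eq_zero_or_pos d with hd | hd
  · subst hd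
    simp only [Nat.cast_zero, Real.sqrt_zero]
    have hz : 2 * (p * M ^ (p-1) * (M * (0 / (lam:ℝ)))) = 0 := by ring
    rw [hz, Real.zero_rpow (by positivity : (0:ℝ) < 1/p).ne']
    have : (2 * p) * 0 * (((lam:ℝ) ^ (1/p))⁻¹) * M = 0 := by ring
    rw [this]
  · have hd1 : (1:ℝ) ≤ Real.sqrt d := by
      rw [Real.one_le_sqrt]; exact_mod_cast hd
    have h2p1 : (1:ℝ) ≤ 2 * p := by linarith
    have hE : 2 * (p * M ^ (p-1) * (M * (Real.sqrt d / lam)))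
        = (2 * p) * (M ^ p * (Real.sqrt d * ((lam:ℝ))⁻¹)) := by
      rw [← hMp]; ring
    rw [hE, Real.mul_rpow (by positivity) (by positivity),
      Real.mul_rpow (Real.rpow_nonneg hM0 _) (by positivity),
      Real.mul_rpow (Real.sqrt_nonneg _) (by positivity)]
    have hMpp : (M ^ p) ^ (1/p) = M := by
      rw [← Real.rpow_mul hM0, mul_one_div, div_self hp0.ne', Real.rpow_one]
    have hinv : (((lam:ℝ))⁻¹) ^ (1/p) = (((lam:ℝ) ^ (1/p))⁻¹) :=
      Real.inv_rpow (by positivity) _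
    rw [hMpp, hinv]
    have hb1 : (2*p) ^ (1/p) ≤ 2*p := by
      calc (2*p) ^ (1/p) ≤ (2*p) ^ (1:ℝ) := Real.rpow_le_rpow_of_exponent_le h2p1 h1p1
        _ = 2*p := Real.rpow_one _
    have hb2 : (Real.sqrt d) ^ (1/p) ≤ Real.sqrt d := by
      calc (Real.sqrt d) ^ (1/p) ≤ (Real.sqrt d) ^ (1:ℝ) :=
            Real.rpow_le_rpow_of_exponent_le hd1 h1p1
        _ = Real.sqrt d := Real.rpow_one _
    calc (2*p) ^ (1/p) * (M * ((Real.sqrt d) ^ (1/p) * (((lam:ℝ) ^ (1/p))⁻¹)))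
        ≤ (2*p) * (M * ((Real.sqrt d) * (((lam:ℝ) ^ (1/p))⁻¹))) := by
          gcongr
      _ = (2 * p) * Real.sqrt d * (((lam:ℝ) ^ (1/p))⁻¹) * M := by ring

/-- **Improved Hölder inequality for slow and fast variables.** -/
theorem improved_holder (p : ℝ) (hp : 1 ≤ p) :
    ∃ C > (0 : ℝ), ∀ (d : ℕ) (lam : ℕ), 0 < lam →
      ∀ f g : (Fin d → ℝ) → ℝ, ContDiff ℝ (⊤ : ℕ∞) f → ZPer f → ContDiff ℝ (⊤ : ℕ∞) g → ZPer g →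
        eLpNorm (fun x => f x * g ((lam : ℝ) • x)) (ENNReal.ofReal p)
            (volume.restrict (Box d))
          ≤ eLpNorm f (ENNReal.ofReal p) (volume.restrict (Box d)) *
              eLpNorm g (ENNReal.ofReal p) (volume.restrict (Box d))
            + ENNReal.ofReal (C * Real.sqrt d * ((lam : ℝ) ^ (1 / p))⁻¹) *
                C1Norm f * eLpNorm g (ENNReal.ofReal p) (volume.restrict (Box d)) := by
  have hp0 : (0:ℝ) < p := by linarith
  refine ⟨2 * p, by linarith, ?_⟩
  intro d lam hlam f g hf hfper hg hgper
  obtain ⟨M, hM0, hbM, hdM, hMC1⟩ := IH.exists_bound hf hfper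
  have hq0 : (ENNReal.ofReal p) ≠ 0 := by
    simp only [ne_eq, ENNReal.ofReal_eq_zero, not_le]; linarith
  have hqt : (ENNReal.ofReal p) ≠ ∞ := ENNReal.ofReal_ne_top
  have hqr : (ENNReal.ofReal p).toReal = p := ENNReal.toReal_ofReal hp0.le
  rw [eLpNorm_eq_lintegral_rpow_enorm_toReal hq0 hqt, eLpNorm_eq_lintegral_rpow_enorm_toReal hq0 hqt,
    eLpNorm_eq_lintegral_rpow_enorm_toReal hq0 hqt, hqr]
  simp only [enorm_eq_nnnorm]
  have h1p0 : (0:ℝ) ≤ 1/p := by positivity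
  have h1p1 : 1/p ≤ 1 := by rw [div_le_one hp0]; linarith
  have hmain := IH.main_estimate hp hlam f g hf hg hgper hbM hdM
  set If := ∫⁻ x in Box d, ((‖f x‖₊ : ℝ≥0∞)) ^ p with hIf
  set Ig := ∫⁻ x in Box d, ((‖g x‖₊ : ℝ≥0∞)) ^ p with hIg
  set ε : ℝ≥0∞ := ENNReal.ofReal (p * M ^ (p-1) * (M * (Real.sqrt d / lam))) with hε
  have hcoef : (2 * ε) ^ (1/p)
      ≤ ENNReal.ofReal (2 * p * Real.sqrt d * (((lam:ℝ) ^ (1/p))⁻¹)) * C1Norm f := by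
    have h2ε : (2:ℝ≥0∞) * ε = ENNReal.ofReal (2 * (p * M ^ (p-1) * (M * (Real.sqrt d / lam)))) := by
      rw [hε, ENNReal.ofReal_mul (by norm_num : (0:ℝ) ≤ 2)]
      norm_num
    rw [h2ε, ENNReal.ofReal_rpow_of_nonneg (by positivity) h1p0, ← hMC1,
      ← ENNReal.ofReal_mul (by positivity)]
    exact ENNReal.ofReal_le_ofReal (IH.coeff_bound hp hM0 d lam hlam)
  calc (∫⁻ x in Box d, ((‖f x * g ((lam:ℝ) • x)‖₊ : ℝ≥0∞)) ^ p) ^ (1/p)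
      ≤ ((If + 2 * ε) * Ig) ^ (1/p) := ENNReal.rpow_le_rpow hmain h1p0
    _ = (If + 2 * ε) ^ (1/p) * Ig ^ (1/p) := ENNReal.mul_rpow_of_nonneg _ _ h1p0
    _ ≤ (If ^ (1/p) + (2 * ε) ^ (1/p)) * Ig ^ (1/p) :=
        mul_le_mul_left (ENNReal.rpow_add_le_add_rpow _ _ h1p0 h1p1) _
    _ = If ^ (1/p) * Ig ^ (1/p) + (2 * ε) ^ (1/p) * Ig ^ (1/p) := add_mul _ _ _
    _ ≤ If ^ (1/p) * Ig ^ (1/p)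
        + ENNReal.ofReal (2 * p * Real.sqrt d * (((lam:ℝ) ^ (1/p))⁻¹)) * C1Norm f * Ig ^ (1/p) :=
        add_le_add_right (mul_le_mul_left hcoef _) _
end
end

section
/- Let u : [0,1] × T^d → R^d be Borel and let η be a finite positive measure on AC([0,1]; T^d) × T^d concentrated on pairs (γ, x) such that γ is an integral curve of u starting from x, and assume that for every t ∈ [0,1] the pushforward of η under the evaluation map (γ, x) ↦ γ(t) equals ρ(t, ·) L^d for some ρ(t, ·) ∈ L^1(T^d). Then for any two Borel maps v, w : [0,1] × T^d → R^d with v = u = w Lebesgue-almost everywhere on [0,1] × T^d, one has ∫ ( ∫_0^1 | v(s, γ(s)) − w(s, γ(s)) | ds ) dη(γ, x) = 0; in particular, η is concentrated on integral curves of v if and only if it is concentrated on integral curves of w. -/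
/-!
Let `N = {v ≠ w}`, a Lebesgue-null subset of `[0,1] × 𝕋^d`. By Tonelli, the `η ⊗ ds`-measure
of `{(γ, x, s) : (s, γ s) ∈ N}` is `∫₀¹ η {γ s ∈ N_s} ds`, and every integrand vanishes because
the time-`s` marginal of `η` is absolutely continuous while `N_s` is null for a.e. `s`.
Tonelli needs `(γ, s) ↦ γ s` to be measurable on the (non-standard) space of all maps
`ℝ → 𝕋^d`; this holds up to an `η`-null set since `η`-a.e. `γ` is an integral curve,
hence continuous on `[0,1]`.
-/

open MeasureTheory
open scoped BigOperators ENNReal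

noncomputable section

/-- The torus `𝕋^d = ℝ^d/ℤ^d`, as a `d`-fold product of circles of length one. -/
abbrev Torus (d : ℕ) := Fin d → AddCircle (1 : ℝ)

/-- The quotient projection `ℝ^d → 𝕋^d`. -/
def projT {d : ℕ} (x : Fin d → ℝ) : Torus d := fun i => (x i : AddCircle (1 : ℝ))

/-- `γ` is an integral curve of the (Borel) vector field `v` starting at `x`:
`γ(0) = x` and, on `[0,1]`, `γ` is the projection of an absolutely continuous lift
`Γ : [0,1] → ℝ^d` with `Γ(t) = Γ(0) + ∫₀ᵗ v(s, γ(s)) ds` (equivalently,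
`γ' (t) = v(t, γ(t))` for a.e. `t ∈ (0,1)`), the integrand being integrable. -/
def IsIntCurve {d : ℕ} (v : ℝ → Torus d → (Fin d → ℝ)) (γ : ℝ → Torus d)
    (x : Torus d) : Prop :=
  γ 0 = x ∧
  MeasureTheory.IntegrableOn (fun s => v s (γ s)) (Set.Icc (0:ℝ) 1) ∧
  ∃ Γ : ℝ → (Fin d → ℝ),
    (∀ t ∈ Set.Icc (0:ℝ) 1, projT (Γ t) = γ t) ∧
    (∀ t ∈ Set.Icc (0:ℝ) 1, Γ t = Γ 0 + ∫ s in (0:ℝ)..t, v s (γ s))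

open Set

lemma continuous_projT {d : ℕ} : Continuous (projT (d := d)) :=
  continuous_pi fun i => (AddCircle.continuous_mk' 1).comp (continuous_apply i)

lemma IsIntCurve.continuousOn {d : ℕ} {v : ℝ → Torus d → (Fin d → ℝ)} {γ : ℝ → Torus d}
    {x : Torus d} (h : IsIntCurve v γ x) : ContinuousOn γ (Icc 0 1) := by
  obtain ⟨-, hint, Γ, hproj, hΓ⟩ := h
  rw [← uIcc_of_le zero_le_one] at hint
  have hlift : ContinuousOn Γ (Icc 0 1) := by
    refine (continuousOn_const.add ?_).congr hΓ
    simpa only [uIcc_of_le zero_le_one] using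
      intervalIntegral.continuousOn_primitive_interval (μ := volume) hint
  exact (continuous_projT.comp_continuousOn hlift).congr fun t ht => (hproj t ht).symm

lemma IsIntCurve.congr_ae {d : ℕ} {v w : ℝ → Torus d → (Fin d → ℝ)} {γ : ℝ → Torus d}
    {x : Torus d} (h : IsIntCurve v γ x)
    (heq : ∀ᵐ s ∂(volume.restrict (Icc 0 1)), v s (γ s) = w s (γ s)) :
    IsIntCurve w γ x := by
  obtain ⟨h0, hint, Γ, hproj, hΓ⟩ := h
  refine ⟨h0, hint.congr heq, Γ, hproj, fun t ht => ?_⟩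
  rw [hΓ t ht, intervalIntegral.integral_congr_ae]
  have hsub : uIoc 0 t ⊆ Icc (0 : ℝ) 1 := by
    rw [uIoc_of_le ht.1]
    exact fun s hs => ⟨hs.1.le, hs.2.trans ht.2⟩
  filter_upwards [(ae_restrict_iff' measurableSet_Icc).1 heq] with s hs hs'
  exact hs (hsub hs')

/-- Off a null set of parameters, `γ x` agrees on `[a, b]` with the continuous curve
`γ x ∘ projIcc a b`, so the evaluation map is a Carathéodory function up to a null set. -/
lemma aemeasurable_eval_of_ae_continuousOn {α Y : Type*} [MeasurableSpace α]
    [TopologicalSpace Y] [TopologicalSpace.PseudoMetrizableSpace Y] [MeasurableSpace Y] [BorelSpace Y]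
    {μ : Measure α} [SFinite μ] {a b : ℝ} (hab : a ≤ b) {γ : α → ℝ → Y}
    (hmeas : ∀ t, Measurable fun x => γ x t)
    (hcont : ∀ᵐ x ∂μ, ContinuousOn (γ x) (Icc a b)) :
    AEMeasurable (fun p : α × ℝ => γ p.1 p.2) (μ.prod (volume.restrict (Icc a b))) := by
  classical
  set N := toMeasurable μ {x | ¬ ContinuousOn (γ x) (Icc a b)}
  have hN : ∀ᵐ x ∂μ, x ∉ N := measure_eq_zero_iff_ae_notMem.1 (by
    rw [measure_toMeasurable]; exact ae_iff.1 hcont)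
  let g : ℝ → α → Y := fun t x => if x ∈ N then γ x a else γ x (projIcc a b hab t)
  have hg : Measurable (Function.uncurry g) := by
    refine measurable_uncurry_of_continuous_of_measurable (fun x => ?_)
      (fun t => Measurable.ite (measurableSet_toMeasurable _ _) (hmeas a) (hmeas _))
    by_cases hx : x ∈ N
    · simpa only [g, hx, if_true] using continuous_const
    · have hxc : ContinuousOn (γ x) (Icc a b) := by
        by_contra h; exact hx (subset_toMeasurable _ _ h)
      simp only [g, hx, if_false]
      exact hxc.comp_continuous (continuous_subtype_val.comp continuous_projIcc)
        fun t => (projIcc a b hab t).2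
  refine ⟨fun p => g p.2 p.1, hg.comp measurable_swap, ?_⟩
  filter_upwards [Measure.quasiMeasurePreserving_fst.ae hN,
    Measure.quasiMeasurePreserving_snd.ae (ae_restrict_mem measurableSet_Icc)] with p hp ht
  simp only [g, hp, if_false, projIcc_of_mem hab ht]

lemma ae_ae_notMem_of_map_absolutelyContinuous {α T Y : Type*} [MeasurableSpace α]
    [MeasurableSpace T] [MeasurableSpace Y] {η : Measure α} {ν : Measure T} {μ : Measure Y}
    [SFinite η] [SFinite ν] [SFinite μ] {γ : α → T → Y}
    (hmeas : ∀ t, Measurable fun x => γ x t)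
    (heval : AEMeasurable (fun p : α × T => γ p.1 p.2) (η.prod ν))
    (hac : ∀ᵐ t ∂ν, η.map (fun x => γ x t) ≪ μ)
    {N : Set (T × Y)} (hN : MeasurableSet N) (hN0 : ν.prod μ N = 0) :
    ∀ᵐ x ∂η, ∀ᵐ t ∂ν, (t, γ x t) ∉ N := by
  have hind : Measurable (N.indicator (1 : T × Y → ℝ≥0∞)) := measurable_one.indicator hN
  have hF : AEMeasurable (fun p : α × T => N.indicator 1 (p.2, γ p.1 p.2)) (η.prod ν) :=
    hind.comp_aemeasurable (measurable_snd.aemeasurable.prodMk heval)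
  have hslice : ∀ᵐ t ∂ν, ∀ᵐ y ∂μ, (t, y) ∉ N :=
    Measure.ae_ae_of_ae_prod (measure_eq_zero_iff_ae_notMem.1 hN0)
  have hzero : ∫⁻ p, N.indicator 1 (p.2, γ p.1 p.2) ∂(η.prod ν) = 0 := by
    rw [lintegral_prod_symm _ hF, ← lintegral_zero]
    refine lintegral_congr_ae ?_
    filter_upwards [hslice, hac] with t ht htac
    rw [← lintegral_map (f := fun y => N.indicator 1 (t, y))
      (hind.comp measurable_prodMk_left) (hmeas t), ← lintegral_zero]
    refine lintegral_congr_ae ?_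
    filter_upwards [htac.ae_le ht] with y hy
    simp [hy]
  filter_upwards [Measure.ae_ae_of_ae_prod ((lintegral_eq_zero_iff' hF).1 hzero)] with x hx
  filter_upwards [hx] with t ht
  simpa using ht

theorem representative_independence_general (d : ℕ)
    (u : ℝ → Torus d → (Fin d → ℝ))
    (η : Measure ((ℝ → Torus d) × Torus d)) [IsFiniteMeasure η]
    (hconc : ∀ᵐ pair ∂η, IsIntCurve u pair.1 pair.2)
    (ρ : ℝ → Torus d → ℝ)
    (hrep : ∀ t ∈ Set.Icc (0:ℝ) 1,
      η.map (fun pair => pair.1 t)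
        = (volume : Measure (Torus d)).withDensity fun x => ENNReal.ofReal (ρ t x))
    (v w : ℝ → Torus d → (Fin d → ℝ))
    (hv : Measurable (Function.uncurry v)) (hw : Measurable (Function.uncurry w))
    (hvu : ∀ᵐ q ∂((volume.restrict (Set.Icc (0:ℝ) 1)).prod (volume : Measure (Torus d))),
      v q.1 q.2 = u q.1 q.2)
    (hwu : ∀ᵐ q ∂((volume.restrict (Set.Icc (0:ℝ) 1)).prod (volume : Measure (Torus d))),
      w q.1 q.2 = u q.1 q.2) :
    (∫ pair, (∫ s in Set.Icc (0:ℝ) 1, ‖v s (pair.1 s) - w s (pair.1 s)‖) ∂η) = 0 ∧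
    ((∀ᵐ pair ∂η, IsIntCurve v pair.1 pair.2) ↔
      (∀ᵐ pair ∂η, IsIntCurve w pair.1 pair.2)) := by
  have hmeas : ∀ t, Measurable fun pair : (ℝ → Torus d) × Torus d => pair.1 t :=
    fun t => (measurable_pi_apply t).comp measurable_fst
  have hac : ∀ᵐ t ∂(volume.restrict (Icc (0 : ℝ) 1)),
      η.map (fun pair => pair.1 t) ≪ volume := by
    filter_upwards [ae_restrict_mem measurableSet_Icc] with t ht
    exact hrep t ht ▸ withDensity_absolutelyContinuous _ _
  have hnull : (volume.restrict (Icc (0 : ℝ) 1)).prod volume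
      {q | Function.uncurry v q ≠ Function.uncurry w q} = 0 := by
    refine measure_eq_zero_iff_ae_notMem.2 ?_
    filter_upwards [hvu, hwu] with q hvq hwq
    exact not_not.2 (hvq.trans hwq.symm)
  have hae : ∀ᵐ pair ∂η, ∀ᵐ s ∂(volume.restrict (Icc (0 : ℝ) 1)),
      v s (pair.1 s) = w s (pair.1 s) := by
    filter_upwards [ae_ae_notMem_of_map_absolutelyContinuous hmeas
      (aemeasurable_eval_of_ae_continuousOn zero_le_one hmeas
        (hconc.mono fun _ h => h.continuousOn))
      hac (measurableSet_eq_fun hv hw).compl hnull] with pair h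
    filter_upwards [h] with s hs
    simpa using hs
  refine ⟨integral_eq_zero_of_ae ?_, fun h => ?_, fun h => ?_⟩
  · filter_upwards [hae] with pair h
    refine integral_eq_zero_of_ae ?_
    filter_upwards [h] with s hs
    simp [hs]
  · filter_upwards [h, hae] with pair hγ hvw
    exact hγ.congr_ae hvw
  · filter_upwards [h, hae] with pair hγ hvw
    exact hγ.congr_ae (hvw.mono fun _ => Eq.symm)

/-- **Independence of the superposition on the pointwise representative.**
If `η` is a finite measure on curve–point pairs, concentrated on integral curves of `u`
starting at the paired point, whose time-`t` marginals are absolutely continuous with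
densities `ρ(t,·) ∈ L¹`, then for any two Borel representatives `v, w` of `u` the curves
seen by `η` do not distinguish `v` from `w`:
`∫ (∫₀¹ |v(s,γ(s)) − w(s,γ(s))| ds) dη(γ,x) = 0`; in particular `η` is concentrated on
integral curves of `v` iff it is concentrated on integral curves of `w`. -/
theorem representative_independence (d : ℕ)
    (u : ℝ → Torus d → (Fin d → ℝ)) (hu : Measurable (Function.uncurry u))
    (η : Measure ((ℝ → Torus d) × Torus d)) [IsFiniteMeasure η]
    (hconc : ∀ᵐ pair ∂η, IsIntCurve u pair.1 pair.2)
    (ρ : ℝ → Torus d → ℝ)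
    (hρint : ∀ t ∈ Set.Icc (0:ℝ) 1, Integrable (ρ t) (volume : Measure (Torus d)))
    (hrep : ∀ t ∈ Set.Icc (0:ℝ) 1,
      η.map (fun pair => pair.1 t)
        = (volume : Measure (Torus d)).withDensity fun x => ENNReal.ofReal (ρ t x))
    (v w : ℝ → Torus d → (Fin d → ℝ))
    (hv : Measurable (Function.uncurry v)) (hw : Measurable (Function.uncurry w))
    (hvu : ∀ᵐ q ∂((volume.restrict (Set.Icc (0:ℝ) 1)).prod (volume : Measure (Torus d))),
      v q.1 q.2 = u q.1 q.2)
    (hwu : ∀ᵐ q ∂((volume.restrict (Set.Icc (0:ℝ) 1)).prod (volume : Measure (Torus d))),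
      w q.1 q.2 = u q.1 q.2) :
    (∫ pair, (∫ s in Set.Icc (0:ℝ) 1, ‖v s (pair.1 s) - w s (pair.1 s)‖) ∂η) = 0 ∧
    ((∀ᵐ pair ∂η, IsIntCurve v pair.1 pair.2) ↔
      (∀ᵐ pair ∂η, IsIntCurve w pair.1 pair.2)) :=
  representative_independence_general d u η hconc ρ hrep v w hv hw hvu hwu
end
end
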